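/- arXiv:math/0303008 — 5 statements merged into one kernel-verified Lean document; each statement's English description precedes it below -/
import Mathlib

section
/- Let X be a complete metric space, f : X → ℝ ∪ {+∞} a lower semicontinuous function, and u ∈ dom(f). Assume there exist δ > 0, η > f(u), σ > 0 and a continuous map H : (B(u,δ) ∩ f^η) × [0,δ] → X such that d(H(v,t), v) ≤ t and f(H(v,t)) ≤ f(v) − σt for every v ∈ B(u,δ) ∩ f^η and every t ∈ [0,δ], where f^η = {v ∈ X : f(v) < η}. Then |df|(u) ≥ σ. -/
open Metric Set Filter
open scoped ENNReal

/-- The epigraph of `f : X → ℝ ∪ {+∞}`, as a subset of `X × ℝ`. -/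
def epiSet {X : Type*} [MetricSpace X] (f : X → EReal) : Set (X × ℝ) :=
  {p | f p.1 ≤ (p.2 : EReal)}

/-- The metric on `X × ℝ`, `d((u,η),(v,μ)) = (d(u,v)² + (η−μ)²)^{1/2}`. -/
noncomputable def distE {X : Type*} [MetricSpace X] (p q : X × ℝ) : ℝ :=
  Real.sqrt (dist p.1 q.1 ^ 2 + (p.2 - q.2) ^ 2)

/-- The open ball in `X × ℝ` with respect to `distE`. -/
def ballE {X : Type*} [MetricSpace X] (p : X × ℝ) (δ : ℝ) : Set (X × ℝ) :=
  {q | distE q p < δ}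

/-- The set of admissible `σ` in the definition of the weak slope `|d G_f|(u, η)`. -/
def slopeSet {X : Type*} [MetricSpace X] (f : X → EReal) (u : X) (η : ℝ) : Set ℝ :=
  {σ | 0 ≤ σ ∧ ∃ δ : ℝ, 0 < δ ∧ ∃ H : X × ℝ → ℝ → X × ℝ,
    ContinuousOn (fun q : (X × ℝ) × ℝ => H q.1 q.2)
      ((ballE (u, η) δ ∩ epiSet f) ×ˢ Icc 0 δ) ∧
    ∀ p ∈ ballE (u, η) δ ∩ epiSet f, ∀ t ∈ Icc (0:ℝ) δ,
      H p t ∈ epiSet f ∧ distE (H p t) p ≤ t ∧ (H p t).2 ≤ p.2 - σ * t}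

/-- The weak slope `|d G_f|(u, η)` of `G_f` at `(u, η) ∈ epi f`. -/
noncomputable def slopeG {X : Type*} [MetricSpace X] (f : X → EReal) (u : X) (η : ℝ) : ℝ :=
  sSup (slopeSet f u η)

/-- The weak slope `|df|(u)` of a lower semicontinuous `f` at `u ∈ dom f`. -/
noncomputable def wslope {X : Type*} [MetricSpace X] (f : X → EReal) (u : X) : ℝ≥0∞ :=
  if slopeG f u (f u).toReal < 1 then
    ENNReal.ofReal (slopeG f u (f u).toReal / Real.sqrt (1 - slopeG f u (f u).toReal ^ 2))
  else ⊤

/-- Admissible `σ` in the definition of the equivariant weak slope `|d_{ℤ₂} G_f|(0, η)`. -/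
def slopeZ2Set {X : Type*} [NormedAddCommGroup X] [NormedSpace ℝ X]
    (f : X → EReal) (η : ℝ) : Set ℝ :=
  {σ | 0 ≤ σ ∧ ∃ δ : ℝ, 0 < δ ∧ ∃ H : X × ℝ → ℝ → X × ℝ,
    ContinuousOn (fun q : (X × ℝ) × ℝ => H q.1 q.2)
      ((ballE ((0 : X), η) δ ∩ epiSet f) ×ˢ Icc 0 δ) ∧
    ∀ p ∈ ballE ((0 : X), η) δ ∩ epiSet f, ∀ t ∈ Icc (0:ℝ) δ,
      H p t ∈ epiSet f ∧ distE (H p t) p ≤ t ∧ (H p t).2 ≤ p.2 - σ * t ∧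
      (H (-p.1, p.2) t).1 = -(H p t).1}

/-- The equivariant weak slope `|d_{ℤ₂} G_f|(0, η)`. -/
noncomputable def slopeZ2 {X : Type*} [NormedAddCommGroup X] [NormedSpace ℝ X]
    (f : X → EReal) (η : ℝ) : ℝ :=
  sSup (slopeZ2Set f η)

/-- Condition (3.3). -/
def cond33 {X : Type*} [MetricSpace X] (f : X → EReal) : Prop :=
  ∀ (u : X) (η : ℝ), (u, η) ∈ epiSet f → f u < (η : EReal) → slopeG f u η = 1

/-- The Palais–Smale condition at level `c`. -/
def PScond {X : Type*} [MetricSpace X] (f : X → EReal) (c : ℝ) : Prop :=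
  ∀ u : ℕ → X, (∀ n, f (u n) ≠ ⊤) →
    Tendsto (fun n => wslope f (u n)) atTop (nhds 0) →
    Tendsto (fun n => f (u n)) atTop (nhds (c : EReal)) →
    ∃ (v : X) (φ : ℕ → ℕ), StrictMono φ ∧ Tendsto (fun n => u (φ n)) atTop (nhds v)

lemma distE_fst' {X : Type*} [MetricSpace X] (p q : X × ℝ) : dist p.1 q.1 ≤ distE p q := by
  rw [distE]
  calc dist p.1 q.1 = Real.sqrt (dist p.1 q.1 ^ 2) := by
        rw [Real.sqrt_sq dist_nonneg]
    _ ≤ _ := Real.sqrt_le_sqrt (by nlinarith [sq_nonneg (p.2 - q.2)])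

lemma distE_snd' {X : Type*} [MetricSpace X] (p q : X × ℝ) : |p.2 - q.2| ≤ distE p q := by
  rw [distE]
  calc |p.2 - q.2| = Real.sqrt ((p.2 - q.2) ^ 2) := (Real.sqrt_sq_eq_abs _).symm
    _ ≤ _ := Real.sqrt_le_sqrt (by nlinarith [sq_nonneg (dist p.1 q.1)])

lemma distE_self' {X : Type*} [MetricSpace X] (p : X × ℝ) : distE p p = 0 := by
  simp [distE]

lemma slopeSet_le_one {X : Type*} [MetricSpace X] (f : X → EReal) (u : X) (η : ℝ)
    (h : f u ≤ (η : EReal)) : slopeSet f u η ⊆ Iic 1 := by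
  rintro τ ⟨hτ0, δ₀, hδ₀, K, -, hK⟩
  have hp : ((u, η) : X × ℝ) ∈ ballE (u, η) δ₀ ∩ epiSet f := by
    constructor
    · show distE (u, η) (u, η) < δ₀
      rw [distE_self']; exact hδ₀
    · exact h
  obtain ⟨-, hd, h2⟩ := hK (u, η) hp δ₀ ⟨le_of_lt hδ₀, le_refl _⟩
  have habs := le_trans (distE_snd' (K (u, η) δ₀) ((u, η) : X × ℝ)) hd
  obtain ⟨h3, h4⟩ := abs_le.1 habs
  simp only at h2 h3 h4
  show τ ≤ 1
  have h5 : τ * δ₀ ≤ 1 * δ₀ := by linarith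
  exact le_of_mul_le_mul_right h5 hδ₀

/-- **Proposition 3.5.** Let `X` be a complete metric space, `f : X → ℝ ∪ {+∞}` lower
semicontinuous, `u ∈ dom f`. If there are `δ > 0`, `η > f u`, `σ > 0` and a continuous map
`H : (B(u,δ) ∩ f^η) × [0,δ] → X` with `d(H(v,t),v) ≤ t` and `f(H(v,t)) ≤ f v - σ t`,
then `|df|(u) ≥ σ`. -/
theorem statement0 {X : Type*} [MetricSpace X] [CompleteSpace X]
    (f : X → EReal) (hlsc : LowerSemicontinuous f) (hbot : ∀ x, f x ≠ ⊥)
    (u : X) (hu : f u ≠ ⊤)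
    (δ η σ : ℝ) (hδ : 0 < δ) (hη : f u < (η : EReal)) (hσ : 0 < σ)
    (H : X → ℝ → X)
    (Hcont : ContinuousOn (fun q : X × ℝ => H q.1 q.2)
      ({v | v ∈ ball u δ ∧ f v < (η : EReal)} ×ˢ Icc 0 δ))
    (Hdist : ∀ v, v ∈ ball u δ → f v < (η : EReal) →
      ∀ t ∈ Icc (0:ℝ) δ, dist (H v t) v ≤ t)
    (Hdec : ∀ v, v ∈ ball u δ → f v < (η : EReal) →
      ∀ t ∈ Icc (0:ℝ) δ, f (H v t) ≤ f v - ((σ * t : ℝ) : EReal)) :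
    ENNReal.ofReal σ ≤ wslope f u := by
  set η₀ : ℝ := (f u).toReal with hη₀
  have hfu : f u = (η₀ : EReal) := (EReal.coe_toReal hu (hbot u)).symm
  have hη₀η : η₀ < η := by
    rw [hfu] at hη; exact_mod_cast hη
  set s : ℝ := Real.sqrt (1 + σ ^ 2) with hs
  have hs1 : 1 ≤ s := by
    rw [hs]
    nlinarith [Real.sq_sqrt (by positivity : (0:ℝ) ≤ 1 + σ ^ 2),
      Real.sqrt_nonneg (1 + σ ^ 2)]
  have hs0 : 0 < s := lt_of_lt_of_le one_pos hs1
  have hssq : s ^ 2 = 1 + σ ^ 2 := Real.sq_sqrt (by positivity)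
  set δ' : ℝ := min δ (η - η₀) with hδ'
  have hδ'0 : 0 < δ' := lt_min hδ (by linarith)
  -- key: points of ballE (u,η₀) δ' ∩ epi are in the good region
  have hkey : ∀ p ∈ ballE ((u : X), η₀) δ' ∩ epiSet f,
      p.1 ∈ ball u δ ∧ f p.1 < (η : EReal) := by
    rintro p ⟨hpb, hpe⟩
    have hd1 : dist p.1 u < δ' := lt_of_le_of_lt (distE_fst' p (u, η₀)) hpb
    have hd2 : |p.2 - η₀| < δ' := lt_of_le_of_lt (distE_snd' p (u, η₀)) hpb
    constructor
    · exact mem_ball.2 (lt_of_lt_of_le hd1 (min_le_left _ _))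
    · have : p.2 < η := by
        have := abs_lt.1 hd2
        have := min_le_right δ (η - η₀)
        rw [← hδ'] at this
        linarith [this.trans_lt' hd2 |>.le]
      exact lt_of_le_of_lt hpe (by exact_mod_cast this)
  -- σ/s belongs to the slope set
  have hmem : σ / s ∈ slopeSet f u η₀ := by
    refine ⟨by positivity, δ', hδ'0, fun p t => (H p.1 (t / s), p.2 - σ * (t / s)), ?_, ?_⟩
    · apply ContinuousOn.prodMk
      · have hg : Continuous (fun q : (X × ℝ) × ℝ => (q.1.1, q.2 / s)) :=
          (continuous_fst.comp continuous_fst).prodMk (continuous_snd.div_const s)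
        apply Hcont.comp hg.continuousOn
        rintro ⟨p, t⟩ ⟨hp, ht⟩
        obtain ⟨hb, hf⟩ := hkey p hp
        refine ⟨⟨hb, hf⟩, ?_, ?_⟩
        · exact div_nonneg ht.1 hs0.le
        · calc t / s ≤ t := by
                rw [div_le_iff₀ hs0]; nlinarith [ht.1]
            _ ≤ δ := le_trans ht.2 (min_le_left _ _)
      · exact (Continuous.sub (continuous_snd.comp continuous_fst)
          (continuous_const.mul (continuous_snd.div_const s))).continuousOn
    · rintro p hp t ht
      obtain ⟨hb, hf⟩ := hkey p hp
      have ht' : t / s ∈ Icc (0:ℝ) δ := by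
        constructor
        · exact div_nonneg ht.1 hs0.le
        · calc t / s ≤ t := by rw [div_le_iff₀ hs0]; nlinarith [ht.1]
            _ ≤ δ := le_trans ht.2 (min_le_left _ _)
      refine ⟨?_, ?_, ?_⟩
      · -- epigraph membership
        show f (H p.1 (t / s)) ≤ ((p.2 - σ * (t / s) : ℝ) : EReal)
        calc f (H p.1 (t / s)) ≤ f p.1 - ((σ * (t / s) : ℝ) : EReal) :=
              Hdec p.1 hb hf (t / s) ht'
          _ ≤ (p.2 : EReal) - ((σ * (t / s) : ℝ) : EReal) :=
              EReal.sub_le_sub hp.2 (le_refl _)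
          _ = ((p.2 - σ * (t / s) : ℝ) : EReal) := by
              rw [← EReal.coe_sub]
      · -- distance bound
        show distE (H p.1 (t / s), p.2 - σ * (t / s)) p ≤ t
        rw [distE]
        have hdd : dist (H p.1 (t / s)) p.1 ≤ t / s := Hdist p.1 hb hf (t / s) ht'
        calc Real.sqrt (dist (H p.1 (t / s)) p.1 ^ 2 + (p.2 - σ * (t / s) - p.2) ^ 2)
            ≤ Real.sqrt ((t / s) ^ 2 + σ ^ 2 * (t / s) ^ 2) := by
              apply Real.sqrt_le_sqrt
              have h1 : dist (H p.1 (t / s)) p.1 ^ 2 ≤ (t / s) ^ 2 := by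
                nlinarith [dist_nonneg (x := H p.1 (t / s)) (y := p.1)]
              nlinarith
          _ = Real.sqrt (s ^ 2 * (t / s) ^ 2) := by rw [hssq]; ring_nf
          _ = s * (t / s) := by
              rw [Real.sqrt_mul' _ (by positivity), Real.sqrt_sq hs0.le,
                Real.sqrt_sq ht'.1]
          _ = t := by field_simp
      · -- decrease of second coordinate
        show p.2 - σ * (t / s) ≤ p.2 - σ / s * t
        have : σ * (t / s) = σ / s * t := by ring
        rw [this]
  -- hence slopeG f u η₀ ≥ σ/s
  have hbdd : BddAbove (slopeSet f u η₀) :=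
    ⟨1, fun x hx => slopeSet_le_one f u η₀ (le_of_eq hfu) hx⟩
  have hle : σ / s ≤ slopeG f u η₀ := le_csSup hbdd hmem
  have hσs1 : σ / s < 1 := by
    rw [div_lt_one hs0]
    nlinarith
  have hσs0 : 0 ≤ σ / s := by positivity
  -- finish
  rw [wslope]
  split_ifs with hcase
  · set a : ℝ := slopeG f u η₀ with ha
    have ha0 : 0 ≤ a := le_trans hσs0 hle
    have ha1 : a < 1 := hcase
    apply ENNReal.ofReal_le_ofReal
    -- σ ≤ a / √(1 - a²)
    have hsq : 0 < Real.sqrt (1 - a ^ 2) := Real.sqrt_pos.2 (by nlinarith)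
    rw [le_div_iff₀ hsq]
    -- σ * √(1-a²) ≤ σ * √(1-(σ/s)²) = σ/s ≤ a
    have h1 : Real.sqrt (1 - a ^ 2) ≤ Real.sqrt (1 - (σ / s) ^ 2) :=
      Real.sqrt_le_sqrt (by nlinarith)
    have h2 : Real.sqrt (1 - (σ / s) ^ 2) = 1 / s := by
      have he : 1 - (σ / s) ^ 2 = (1 / s) ^ 2 := by
        field_simp
        nlinarith
      rw [he, Real.sqrt_sq (by positivity)]
    calc σ * Real.sqrt (1 - a ^ 2) ≤ σ * (1 / s) := by
          rw [← h2]; exact mul_le_mul_of_nonneg_left h1 hσ.le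
      _ = σ / s := by ring
      _ ≤ a := hle
  · exact le_top
end

section
/- Let N ≥ 1 and let j : ℝ^N → ℝ be convex and differentiable, and let a > 0 be such that 0 ≤ j(ξ) ≤ a|ξ|² for every ξ ∈ ℝ^N. Then |∇j(ξ)| ≤ 4a|ξ| for every ξ ∈ ℝ^N. -/
open Set

/-- **Remark 4.1 (first part).** If `j : ℝ^N → ℝ` is convex and differentiable with
`0 ≤ j ξ ≤ a |ξ|²`, then `|∇j(ξ)| ≤ 4 a |ξ|`. -/
theorem statement9 (N : ℕ) (hN : 1 ≤ N)
    (j : EuclideanSpace ℝ (Fin N) → ℝ)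
    (hconv : ConvexOn ℝ univ j) (hdiff : Differentiable ℝ j)
    (a : ℝ) (ha : 0 < a)
    (hbound : ∀ ξ, 0 ≤ j ξ ∧ j ξ ≤ a * ‖ξ‖ ^ 2) :
    ∀ ξ, ‖gradient j ξ‖ ≤ 4 * a * ‖ξ‖ := by
  intro ξ
  by_cases hξ : ξ = 0
  · -- ξ = 0 : the origin is a global minimum, so the derivative vanishes
    subst hξ
    have hmin : IsLocalMin j 0 := by
      apply Filter.Eventually.of_forall
      intro x
      have h0 : j 0 ≤ a * ‖(0 : EuclideanSpace ℝ (Fin N))‖ ^ 2 := (hbound 0).2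
      simp only [norm_zero] at h0
      have : j 0 ≤ 0 := by nlinarith
      exact le_trans this (hbound x).1
    have hfd : fderiv ℝ j 0 = 0 := hmin.fderiv_eq_zero
    unfold gradient
    rw [hfd]
    simp
  · set g := gradient j ξ with hg
    by_cases hg0 : g = 0
    · rw [hg0]
      simp
      positivity
    · set v : EuclideanSpace ℝ (Fin N) := ‖g‖⁻¹ • g with hv
      have hvnorm : ‖v‖ = 1 := by
        rw [hv, norm_smul, norm_inv, norm_norm, inv_mul_cancel₀ (norm_ne_zero_iff.mpr hg0)]
      -- the function restricted to the line
      set φ : ℝ → ℝ := fun t => j (ξ + t • v) with hφ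
      have hφconv : ConvexOn ℝ univ φ := by
        have : φ = j ∘ (AffineMap.lineMap ξ (ξ + v) : ℝ →ᵃ[ℝ] EuclideanSpace ℝ (Fin N)) := by
          funext t
          simp [hφ, AffineMap.lineMap_apply, add_comm]
        rw [this]
        have := hconv.comp_affineMap (AffineMap.lineMap ξ (ξ + v))
        simpa using this
      -- derivative of φ at 0 is ⟪g, v⟫ = ‖g‖
      have hline : HasDerivAt (fun t : ℝ => ξ + t • v) v 0 := by
        simpa using ((hasDerivAt_id (0:ℝ)).smul_const v).const_add ξ
      have hcomp : HasDerivAt φ ((fderiv ℝ j ξ) v) 0 := by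
        have hj : HasFDerivAt j (fderiv ℝ j ξ) (ξ + (0:ℝ) • v) := by
          simpa using (hdiff ξ).hasFDerivAt
        exact hj.comp_hasDerivAt 0 hline
      have hfg : (fderiv ℝ j ξ) v = ‖g‖ := by
        have h1 : (fderiv ℝ j ξ) v = inner ℝ g v := by
          rw [hg]
          unfold gradient
          exact (InnerProductSpace.toDual_symm_apply).symm
        rw [h1, hv, real_inner_smul_right, real_inner_self_eq_norm_sq]
        rw [pow_two, ← mul_assoc, inv_mul_cancel₀ (norm_ne_zero_iff.mpr hg0), one_mul]
      rw [hfg] at hcomp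
      -- slope inequality
      have hξpos : (0:ℝ) < ‖ξ‖ := norm_pos_iff.mpr hξ
      have hslope := hφconv.le_slope_of_hasDerivAt (mem_univ 0) (mem_univ ‖ξ‖) hξpos hcomp
      rw [slope_def_field] at hslope
      have hφ0 : 0 ≤ φ 0 := (hbound _).1
      have hφt : φ ‖ξ‖ ≤ a * (2 * ‖ξ‖) ^ 2 := by
        refine le_trans (hbound _).2 ?_
        have hnorm : ‖ξ + ‖ξ‖ • v‖ ≤ 2 * ‖ξ‖ := by
          calc ‖ξ + ‖ξ‖ • v‖ ≤ ‖ξ‖ + ‖‖ξ‖ • v‖ := norm_add_le _ _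
            _ = ‖ξ‖ + ‖ξ‖ := by rw [norm_smul, hvnorm]; simp [abs_of_nonneg hξpos.le]
            _ = 2 * ‖ξ‖ := by ring
        have := pow_le_pow_left₀ (norm_nonneg _) hnorm 2
        nlinarith
      have : ‖g‖ ≤ (φ ‖ξ‖ - φ 0) / (‖ξ‖ - 0) := hslope
      rw [sub_zero] at this
      have h2 : (φ ‖ξ‖ - φ 0) / ‖ξ‖ ≤ 4 * a * ‖ξ‖ := by
        rw [div_le_iff₀ hξpos]
        nlinarith
      linarith
end

section
/- Let N ≥ 1 and let j : ℝ^N → ℝ be convex, differentiable, nonnegative, with j(0) = 0, and radial, i.e., there exists ĵ : [0,∞) → ℝ such that j(ξ) = ĵ(|ξ|) for every ξ ∈ ℝ^N. Then |ξ| · |∇j(ξ)| ≤ √2 ⟨∇j(ξ), ξ⟩ for every ξ ∈ ℝ^N. -/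
open Set
open scoped RealInnerProductSpace

/-- **Theorem 4.10 (key inequality).** If `j : ℝ^N → ℝ` is convex, differentiable, nonnegative,
`j 0 = 0` and radial (`j ξ = ĵ(|ξ|)`), then `|ξ| |∇j(ξ)| ≤ √2 ⟨∇j(ξ), ξ⟩`. -/
theorem statement13 (N : ℕ) (hN : 1 ≤ N)
    (j : EuclideanSpace ℝ (Fin N) → ℝ)
    (hconv : ConvexOn ℝ univ j) (hdiff : Differentiable ℝ j)
    (hnonneg : ∀ ξ, 0 ≤ j ξ) (hj0 : j 0 = 0)
    (hradial : ∃ jhat : ℝ → ℝ, ∀ ξ, j ξ = jhat ‖ξ‖) :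
    ∀ ξ, ‖ξ‖ * ‖gradient j ξ‖ ≤ Real.sqrt 2 * ⟪gradient j ξ, ξ⟫ := by
  obtain ⟨jhat, hjhat⟩ := hradial
  intro ξ
  by_cases hξ : ξ = 0
  · subst hξ; simp
  have hξn : (0:ℝ) < ‖ξ‖ := norm_pos_iff.mpr hξ
  set G := gradient j ξ with hGdef
  have hfd : HasFDerivAt j (InnerProductSpace.toDual ℝ _ G) ξ :=
    ((hdiff ξ).hasGradientAt).hasFDerivAt
  -- Step 1: gradient is orthogonal to every vector orthogonal to ξ
  have key : ∀ v : EuclideanSpace ℝ (Fin N), ⟪ξ, v⟫ = 0 → ⟪G, v⟫ = 0 := by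
    intro v hv
    -- derivative of t ↦ j (ξ + t • v) at 0 is ⟪G, v⟫
    have hL : HasDerivAt (fun t : ℝ => ξ + t • v) v 0 := by
      simpa using ((hasDerivAt_id (0:ℝ)).smul_const v).const_add ξ
    have hd1 : HasDerivAt (fun t : ℝ => j (ξ + t • v)) ⟪G, v⟫ 0 := by
      have hfd0 : HasFDerivAt j (InnerProductSpace.toDual ℝ _ G) (ξ + (0:ℝ) • v) := by
        simpa using hfd
      have := hfd0.comp_hasDerivAt 0 hL
      simpa [InnerProductSpace.toDual_apply_apply, Function.comp_def] using this
    -- norm computation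
    have hnorm : ∀ t : ℝ, ‖ξ + t • v‖ = Real.sqrt (‖ξ‖^2 + t^2 * ‖v‖^2) := by
      intro t
      have h1 : ‖ξ + t • v‖^2 = ‖ξ‖^2 + t^2 * ‖v‖^2 := by
        rw [norm_add_sq_real, real_inner_smul_right, hv, norm_smul]
        simp [mul_pow]
      rw [← h1, Real.sqrt_sq (norm_nonneg _)]
    -- the comparison curve
    set g : ℝ → EuclideanSpace ℝ (Fin N) :=
      fun t => (Real.sqrt (‖ξ‖^2 + t^2 * ‖v‖^2) / ‖ξ‖) • ξ with hgdef
    have hfun : (fun t : ℝ => j (ξ + t • v)) = fun t => j (g t) := by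
      funext t
      have hgt : ‖g t‖ = Real.sqrt (‖ξ‖^2 + t^2 * ‖v‖^2) := by
        rw [hgdef]
        simp only [norm_smul, Real.norm_eq_abs, abs_div, abs_of_nonneg (Real.sqrt_nonneg _),
          abs_of_pos hξn]
        field_simp
      rw [hjhat, hjhat, hnorm t, hgt]
    have hg0 : g 0 = ξ := by
      rw [hgdef]; simp [Real.sqrt_sq (le_of_lt hξn), div_self (ne_of_gt hξn)]
    -- derivative of g at 0 is 0
    have hu : HasDerivAt (fun t : ℝ => ‖ξ‖^2 + t^2 * ‖v‖^2) 0 0 := by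
      simpa using ((hasDerivAt_pow 2 (0:ℝ)).mul_const (‖v‖^2)).const_add (‖ξ‖^2)
    have hsq : HasDerivAt (fun t : ℝ => Real.sqrt (‖ξ‖^2 + t^2 * ‖v‖^2)) 0 0 := by
      have hne : (‖ξ‖^2 + (0:ℝ)^2 * ‖v‖^2) ≠ 0 := by positivity
      have := (Real.hasDerivAt_sqrt hne).comp 0 hu
      simpa [Function.comp_def] using this
    have hg : HasDerivAt g 0 0 := by
      have := (hsq.div_const ‖ξ‖).smul_const ξ
      simpa using this
    have hd2 : HasDerivAt (fun t : ℝ => j (g t)) 0 0 := by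
      have hfd' : HasFDerivAt j (InnerProductSpace.toDual ℝ _ G) (g 0) := by rw [hg0]; exact hfd
      have := hfd'.comp_hasDerivAt 0 hg
      simpa [Function.comp_def] using this
    rw [hfun] at hd1
    exact hd1.unique hd2
  -- Step 2: G is a nonnegative multiple of ξ
  have hw : ⟪G, ξ⟫^2 = ‖G‖^2 * ‖ξ‖^2 := by
    have horth : ⟪ξ, G - (⟪G, ξ⟫ / ‖ξ‖^2) • ξ⟫ = 0 := by
      rw [inner_sub_right, real_inner_smul_right, real_inner_self_eq_norm_sq,
        real_inner_comm]
      field_simp; ring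
    have := key _ horth
    rw [inner_sub_right, real_inner_smul_right, sub_eq_zero] at this
    have hGG : ⟪G, G⟫ = ‖G‖^2 := real_inner_self_eq_norm_sq G
    rw [hGG] at this
    field_simp at this ⊢
    nlinarith [this]
  -- Step 3: ⟪G, ξ⟫ ≥ j ξ ≥ 0 by convexity
  have hpos : 0 ≤ ⟪G, ξ⟫ := by
    set φ : ℝ → ℝ := fun t => j (t • ξ) with hφdef
    have hφconv : ConvexOn ℝ univ φ := by
      refine ⟨convex_univ, fun a _ b _ wa wb hwa hwb hab => ?_⟩
      have : (wa * a + wb * b) • ξ = wa • (a • ξ) + wb • (b • ξ) := by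
        rw [add_smul, smul_smul, smul_smul]
      simpa [hφdef, this] using hconv.2 (mem_univ (a • ξ)) (mem_univ (b • ξ)) hwa hwb hab
    have hφd : HasDerivAt φ ⟪G, ξ⟫ 1 := by
      have hL : HasDerivAt (fun t : ℝ => t • ξ) ξ 1 := by
        simpa using (hasDerivAt_id (1:ℝ)).smul_const ξ
      have hfd' : HasFDerivAt j (InnerProductSpace.toDual ℝ _ G) ((1:ℝ) • ξ) := by
        rw [one_smul]; exact hfd
      have := hfd'.comp_hasDerivAt 1 hL
      simpa [hφdef, InnerProductSpace.toDual_apply_apply, Function.comp_def] using this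
    have hslope := hφconv.slope_le_of_hasDerivAt (mem_univ (0:ℝ)) (mem_univ (1:ℝ))
      one_pos hφd
    have hs : slope φ 0 1 = j ξ := by
      simp [slope, hφdef, hj0]
    rw [hs] at hslope
    exact le_trans (hnonneg ξ) hslope
  -- Conclusion
  have hGn : ‖ξ‖ * ‖G‖ = ⟪G, ξ⟫ := by
    have h1 : (‖ξ‖ * ‖G‖)^2 = ⟪G, ξ⟫^2 := by rw [hw]; ring
    have h2 : 0 ≤ ‖ξ‖ * ‖G‖ := by positivity
    nlinarith [h1, h2, hpos]
  rw [hGn]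
  nlinarith [Real.sq_sqrt (by norm_num : (2:ℝ) ≥ 0), Real.sqrt_nonneg 2, hpos,
    Real.one_le_sqrt.mpr (by norm_num : (1:ℝ) ≤ 2)]
end

section
/- Let g : ℝ → ℝ be continuous and define G(s) = ∫₀^s g(t) dt. Let p > 2 and R > 0, and assume that 0 < pG(s) ≤ g(s)s for every s ∈ ℝ with |s| ≥ R. Then for every s ∈ ℝ with |s| ≥ R one has G(s) ≥ (1/R^p) · min{G(R), G(−R)} · |s|^p. -/
open Set


lemma aux_mono (g G : ℝ → ℝ) (hg : Continuous g)
    (hG : ∀ s, G s = ∫ t in (0:ℝ)..s, g t) (p R : ℝ) (hp : 0 < p) (hR : 0 < R)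
    (hyp : ∀ t : ℝ, R ≤ t → p * G t ≤ g t * t) :
    MonotoneOn (fun t => G t * t ^ (-p)) (Ici R) := by
  have hGderiv : ∀ x : ℝ, HasDerivAt G (g x) x := by
    intro x
    have : HasDerivAt (fun u => ∫ t in (0:ℝ)..u, g t) (g x) x :=
      intervalIntegral.integral_hasDerivAt_right (hg.intervalIntegrable 0 x)
        (hg.stronglyMeasurableAtFilter _ _) hg.continuousAt
    exact this.congr_of_eventuallyEq (by filter_upwards with u using (hG u))
  have hF : ∀ x : ℝ, 0 < x →
      HasDerivAt (fun t => G t * t ^ (-p))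
        (g x * x ^ (-p) + G x * (-p * x ^ (-p - 1))) x := by
    intro x hx
    exact (hGderiv x).mul (Real.hasDerivAt_rpow_const (Or.inl hx.ne'))
  have hGc : Continuous G := continuous_iff_continuousAt.2 fun x => (hGderiv x).continuousAt
  apply monotoneOn_of_deriv_nonneg (convex_Ici R)
  · exact hGc.continuousOn.mul
      (fun x hx => (Real.continuousAt_rpow_const x (-p) (Or.inl (hR.trans_le hx).ne')).continuousWithinAt)
  · intro x hx
    rw [interior_Ici] at hx
    exact ((hF x (hR.trans hx)).differentiableAt).differentiableWithinAt
  · intro x hx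
    rw [interior_Ici] at hx
    have hx0 : 0 < x := hR.trans hx
    rw [(hF x hx0).deriv]
    have key : p * G x ≤ g x * x := hyp x hx.le
    have hpow : x ^ (-p) = x ^ (-p - 1) * x := by
      rw [← Real.rpow_add_one hx0.ne']; ring_nf
    have hpos : 0 < x ^ (-p - 1) := Real.rpow_pos_of_pos hx0 _
    have : g x * x ^ (-p) + G x * (-p * x ^ (-p - 1))
        = x ^ (-p - 1) * (g x * x - p * G x) := by rw [hpow]; ring
    rw [this]
    exact mul_nonneg hpos.le (by linarith)

lemma aux_final (x y m a b : ℝ) (ha : 0 < a) (hb : 0 < b)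
    (key : x * a⁻¹ ≤ y * b⁻¹) (hm : m ≤ x) : (1 / a) * m * b ≤ y := by
  have h1 : x * a⁻¹ * b ≤ y := by
    have h := mul_le_mul_of_nonneg_right key hb.le
    have e : y * b⁻¹ * b = y := by field_simp
    linarith [e ▸ h]
  have h2 : (1 / a) * m * b ≤ (1 / a) * x * b :=
    mul_le_mul_of_nonneg_right (mul_le_mul_of_nonneg_left hm (by positivity)) hb.le
  have h3 : (1 / a) * x * b = x * a⁻¹ * b := by ring
  linarith

/-- **Remark 2.2 (last part).** If `g` is continuous, `G(s) = ∫₀^s g`, `p > 2`, `R > 0` and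
`0 < p G(s) ≤ g(s) s` for `|s| ≥ R`, then `G(s) ≥ R^{-p} min{G(R), G(-R)} |s|^p` for `|s| ≥ R`. -/
theorem statement14 (g : ℝ → ℝ) (hg : Continuous g)
    (G : ℝ → ℝ) (hG : ∀ s, G s = ∫ t in (0:ℝ)..s, g t)
    (p R : ℝ) (hp : 2 < p) (hR : 0 < R)
    (hyp : ∀ s : ℝ, R ≤ |s| → 0 < p * G s ∧ p * G s ≤ g s * s) :
    ∀ s : ℝ, R ≤ |s| → (1 / R ^ p) * min (G R) (G (-R)) * |s| ^ p ≤ G s := by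
  intro s hs
  have hp0 : 0 < p := by linarith
  have hRp : (0:ℝ) < R ^ p := Real.rpow_pos_of_pos hR _
  have hs0 : 0 < |s| := lt_of_lt_of_le hR hs
  have hsp : (0:ℝ) < |s| ^ p := Real.rpow_pos_of_pos hs0 _
  rcases le_or_gt 0 s with h0 | h0
  · -- s ≥ R
    have habs : |s| = s := abs_of_nonneg h0
    have hsR : R ≤ s := habs ▸ hs
    have hmono := aux_mono g G hg hG p R hp0 hR (fun t ht => by
      have ht0 : 0 < t := hR.trans_le ht
      exact (hyp t (by rwa [abs_of_pos ht0])).2)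
    have key := hmono (self_mem_Ici) hsR hsR
    simp only [Real.rpow_neg hR.le, Real.rpow_neg (hR.trans_le hsR).le] at key
    rw [habs]
    exact aux_final (G R) (G s) _ _ _ hRp (habs ▸ hsp) key (min_le_left _ _)
  · -- s ≤ -R
    have habs : |s| = -s := abs_of_neg h0
    have hsR : R ≤ -s := habs ▸ hs
    have hG2 : ∀ u : ℝ, G (-u) = ∫ t in (0:ℝ)..u, -g (-t) := by
      intro u
      rw [hG (-u)]
      have h1 : ∫ t in (0:ℝ)..u, -g (-t) = -∫ t in (-u:ℝ)..(0:ℝ), g t := by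
        rw [intervalIntegral.integral_neg]
        congr 1
        simpa using intervalIntegral.integral_comp_neg (a := (0:ℝ)) (b := u) g
      rw [h1, intervalIntegral.integral_symm]
    have hmono := aux_mono (fun t => -g (-t)) (fun t => G (-t)) (by continuity) hG2 p R hp0 hR
      (fun t ht => by
        have ht0 : 0 < t := hR.trans_le ht
        have := (hyp (-t) (by rwa [abs_neg, abs_of_pos ht0])).2
        linarith)
    have key := hmono (self_mem_Ici) hsR hsR
    simp only [neg_neg] at key
    simp only [Real.rpow_neg hR.le, Real.rpow_neg (hR.trans_le hsR).le] at key
    rw [habs]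
    exact aux_final (G (-R)) (G s) _ _ _ hRp (habs ▸ hsp) key (min_le_right _ _)
end

section
/- Let N ≥ 1, R > 0, and let j : ℝ × ℝ^N → ℝ be such that for every s ∈ ℝ the map ξ ↦ j(s,ξ) is convex, for every ξ ∈ ℝ^N the map s ↦ j(s,ξ) is differentiable with derivative j_s(s,ξ), and j_s(s,ξ)·s ≥ 0 for every ξ ∈ ℝ^N and every s ∈ ℝ with |s| ≥ R. Let k ≥ R and let T_k : ℝ → ℝ be the truncation T_k(s) = s if |s| ≤ k and T_k(s) = k·s/|s| if |s| ≥ k. Then for every s ∈ ℝ, every ξ, η ∈ ℝ^N and every t ∈ [0,1]: j((1−t)s + t·T_k(s), (1−t)ξ + t·η) ≤ (1−t)·j(s,ξ) + t·j(s,η). -/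
open Set

/-- **Step in Theorem 3.11.** Convexity inequality for the truncation: if `ξ ↦ j(s,ξ)` is convex,
`s ↦ j(s,ξ)` is differentiable with derivative `j_s(s,ξ)` satisfying `j_s(s,ξ) s ≥ 0` for
`|s| ≥ R`, and `k ≥ R`, then for the truncation `T_k` and all `t ∈ [0,1]`:
`j((1−t)s + t T_k(s), (1−t)ξ + tη) ≤ (1−t) j(s,ξ) + t j(s,η)`. -/
theorem statement15 (N : ℕ) (hN : 1 ≤ N) (R : ℝ) (hR : 0 < R)
    (j : ℝ → EuclideanSpace ℝ (Fin N) → ℝ)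
    (js : ℝ → EuclideanSpace ℝ (Fin N) → ℝ)
    (hconv : ∀ s, ConvexOn ℝ univ (j s))
    (hdiff : ∀ (s : ℝ) (ξ : EuclideanSpace ℝ (Fin N)),
      HasDerivAt (fun s' => j s' ξ) (js s ξ) s)
    (hsign : ∀ (s : ℝ) (ξ : EuclideanSpace ℝ (Fin N)), R ≤ |s| → 0 ≤ js s ξ * s)
    (k : ℝ) (hk : R ≤ k)
    (Tk : ℝ → ℝ) (hTk : ∀ s, Tk s = if |s| ≤ k then s else k * s / |s|) :
    ∀ (s : ℝ) (ξ η : EuclideanSpace ℝ (Fin N)) (t : ℝ), t ∈ Icc (0:ℝ) 1 →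
      j ((1 - t) * s + t * Tk s) ((1 - t) • ξ + t • η) ≤
        (1 - t) * j s ξ + t * j s η := by
  intro s ξ η t ht
  obtain ⟨ht0, ht1⟩ := ht
  set s' : ℝ := (1 - t) * s + t * Tk s with hs'
  have hkpos : 0 < k := lt_of_lt_of_le hR hk
  -- key monotonicity fact : j s' ζ ≤ j s ζ for every ζ
  have key : ∀ ζ : EuclideanSpace ℝ (Fin N), j s' ζ ≤ j s ζ := by
    intro ζ
    by_cases hks : |s| ≤ k
    · have h1 : Tk s = s := by rw [hTk]; simp [hks]
      have h2 : s' = s := by rw [hs', h1]; ring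
      rw [h2]
    · push_neg at hks
      have hdf : ∀ u : ℝ, HasDerivAt (fun u => j u ζ) (js u ζ) u := fun u => hdiff u ζ
      have hderiv : deriv (fun u => j u ζ) = fun u => js u ζ :=
        funext fun u => (hdf u).deriv
      rcases le_or_gt 0 s with hs0 | hs0
      · -- s > k > 0
        have hsk : k < s := by rwa [abs_of_nonneg hs0] at hks
        have hsne : s ≠ 0 := ne_of_gt (lt_trans hkpos hsk)
        have hT : Tk s = k := by
          rw [hTk, if_neg (not_le.mpr hks), abs_of_nonneg hs0, mul_div_assoc,
            div_self hsne, mul_one]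
        have hs'mem : s' ∈ Icc k s := by
          constructor
          · rw [hs', hT]; nlinarith
          · rw [hs', hT]; nlinarith
        have hmono : MonotoneOn (fun u => j u ζ) (Icc k s) := by
          apply monotoneOn_of_deriv_nonneg (convex_Icc k s)
          · exact fun u _ => ((hdf u).continuousAt).continuousWithinAt
          · exact fun u _ => ((hdf u).differentiableAt).differentiableWithinAt
          · intro u hu
            rw [interior_Icc] at hu
            have hu0 : 0 < u := lt_of_lt_of_le hkpos hu.1.le
            have hRu : R ≤ |u| := by rw [abs_of_pos hu0]; linarith [hu.1]
            have := hsign u ζ hRu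
            rw [hderiv]
            nlinarith
        exact hmono hs'mem (right_mem_Icc.mpr (le_of_lt hsk)) hs'mem.2
      · -- s < -k
        have hsk : s < -k := by
          rw [abs_of_neg hs0] at hks; linarith
        have hsne : s ≠ 0 := ne_of_lt hs0
        have hT : Tk s = -k := by
          rw [hTk, if_neg (not_le.mpr hks), abs_of_neg hs0, div_neg, mul_div_assoc,
            div_self hsne, mul_one]
        have hs'mem : s' ∈ Icc s (-k) := by
          constructor
          · rw [hs', hT]; nlinarith
          · rw [hs', hT]; nlinarith
        have hanti : AntitoneOn (fun u => j u ζ) (Icc s (-k)) := by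
          apply antitoneOn_of_deriv_nonpos (convex_Icc s (-k))
          · exact fun u _ => ((hdf u).continuousAt).continuousWithinAt
          · exact fun u _ => ((hdf u).differentiableAt).differentiableWithinAt
          · intro u hu
            rw [interior_Icc] at hu
            have hu0 : u < 0 := by linarith [hu.2]
            have hRu : R ≤ |u| := by rw [abs_of_neg hu0]; linarith [hu.2]
            have := hsign u ζ hRu
            rw [hderiv]
            nlinarith
        exact hanti (left_mem_Icc.mpr (le_of_lt hsk)) hs'mem hs'mem.1
  have hcv := (hconv s').2 (mem_univ ξ) (mem_univ η) (by linarith : (0:ℝ) ≤ 1 - t) ht0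
    (by ring : (1 - t) + t = 1)
  calc j s' ((1 - t) • ξ + t • η) ≤ (1 - t) • j s' ξ + t • j s' η := hcv
    _ = (1 - t) * j s' ξ + t * j s' η := by simp [smul_eq_mul]
    _ ≤ (1 - t) * j s ξ + t * j s η := by
        have h1 := key ξ; have h2 := key η
        nlinarith
end
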